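/- arXiv:1102.0958 — 2 statements merged into one kernel-verified Lean document; each statement's English description precedes it below -/
import Mathlib

section
/- Let (0, x̄) with x̄ ∈ F(0) be a local minimizer of φ over gph F, i.e., there is a neighborhood W of (0, x̄) in l_∞(T) × X such that φ(0, x̄) ≤ φ(p, x) for all (p, x) ∈ W with x ∈ F(p). If φ : l_∞(T) × X → ℝ is Fréchet differentiable at (0, x̄) with partial derivatives ∇_p φ(0, x̄) ∈ l_∞(T)* and ∇_x φ(0, x̄) ∈ X*, then −(∇_p φ(0, x̄), ∇_x φ(0, x̄), ⟨∇_x φ(0, x̄), x̄⟩) ∈ cl* cone(⋃_{t∈T} ({−δ_t} × gph f_t*)) in l_∞(T)* × X* × ℝ. -/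
open Filter
open scoped ENNReal

noncomputable section

/-- The Banach space `l_∞(T)` of bounded real functions on `T` with sup norm. -/
abbrev Linf (T : Type*) : Type _ := lp (fun _ : T => ℝ) ∞

/-- The Dirac evaluation functional `δ_t ∈ l_∞(T)*`. -/
def dirac (T : Type*) (t : T) : Linf T →L[ℝ] ℝ :=
  LinearMap.mkContinuous
    { toFun := fun p => p t
      map_add' := fun p q => by simp [lp.coeFn_add]
      map_smul' := fun c p => by simp [lp.coeFn_smul] }
    1 (fun p => by rw [one_mul]; exact lp.norm_apply_le_norm ENNReal.top_ne_zero p t)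

variable {X : Type*} [NormedAddCommGroup X] [NormedSpace ℝ X]

/-- Fenchel conjugate of an extended-real-valued function. -/
def conj (g : X → EReal) (u : X →L[ℝ] ℝ) : EReal :=
  ⨆ x : X, (u x : EReal) - g x

/-- `dom g* = {u* : g*(u*) < +∞}`. -/
def domConj (g : X → EReal) : Set (X →L[ℝ] ℝ) := {u | conj g u < ⊤}

/-- `gph g* = {(u*, g*(u*)) : u* ∈ dom g*}`. -/
def gphConj (g : X → EReal) : Set ((X →L[ℝ] ℝ) × ℝ) :=
  {q | conj g q.1 = (q.2 : EReal)}

/-- `epi g* = {(u*, γ) : g*(u*) ≤ γ}`. -/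
def epiConj (g : X → EReal) : Set ((X →L[ℝ] ℝ) × ℝ) :=
  {q | conj g q.1 ≤ (q.2 : EReal)}

/-- A proper extended-real-valued function: never `⊥`, not identically `⊤`. -/
def ErealProper (g : X → EReal) : Prop := (∀ x, g x ≠ ⊥) ∧ ∃ x, g x ≠ ⊤

/-- Convexity of an extended-real-valued function. -/
def ErealConvexOn (g : X → EReal) : Prop :=
  ∀ x y : X, ∀ a b : ℝ, 0 ≤ a → 0 ≤ b → a + b = 1 →
    g (a • x + b • y) ≤ (a : EReal) * g x + (b : EReal) * g y

variable {T : Type*}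

/-- The feasible solution map `F(p) = {x : f_t(x) ≤ p_t ∀ t}`. -/
def feas (f : T → X → EReal) (p : Linf T) : Set X :=
  {x | ∀ t, f t x ≤ ((p t : ℝ) : EReal)}

/-- The graph of the feasible solution map. -/
def feasGraph (f : T → X → EReal) : Set (Linf T × X) :=
  {q | q.2 ∈ feas f q.1}

/-- Lipschitz-like (Aubin) property of a set-valued map (given by its graph `G`)
around `(z̄, ȳ) ∈ G` with modulus `ℓ`. -/
def LipLike {Z Y : Type*} [NormedAddCommGroup Z] [NormedAddCommGroup Y]
    (G : Set (Z × Y)) (zb : Z) (yb : Y) (ℓ : ℝ) : Prop :=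
  ∃ U ∈ nhds zb, ∃ V ∈ nhds yb, ∀ z ∈ U, ∀ u ∈ U, ∀ y ∈ V,
    (z, y) ∈ G → ∃ y', (u, y') ∈ G ∧ ‖y - y'‖ ≤ ℓ * ‖z - u‖

/-- The exact Lipschitzian bound `lip G(z̄, ȳ)` (value `∞` if the map is not
Lipschitz-like around `(z̄, ȳ)`). -/
def lipBound {Z Y : Type*} [NormedAddCommGroup Z] [NormedAddCommGroup Y]
    (G : Set (Z × Y)) (zb : Z) (yb : Y) : ℝ≥0∞ :=
  sInf {c : ℝ≥0∞ | ∃ ℓ : ℝ, 0 ≤ ℓ ∧ LipLike G zb yb ℓ ∧ c = ENNReal.ofReal ℓ}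

/-- Coderivative of a convex-graph map `G` at `(0, ȳ)`:
`z* ∈ D*G(0, ȳ)(y*)` iff `⟨z*, z⟩ − ⟨y*, y⟩ ≤ −⟨y*, ȳ⟩` for all `(z, y) ∈ G`. -/
def coderivMem {Z Y : Type*} [NormedAddCommGroup Z] [NormedSpace ℝ Z]
    [NormedAddCommGroup Y] [NormedSpace ℝ Y]
    (G : Set (Z × Y)) (yb : Y) (ys : Y →L[ℝ] ℝ) (zs : Z →L[ℝ] ℝ) : Prop :=
  ∀ q ∈ G, zs q.1 - ys q.2 ≤ - ys yb

/-- The coderivative norm `‖D*G(0, ȳ)‖ = sup{‖z*‖ : z* ∈ D*G(0, ȳ)(y*), ‖y*‖ ≤ 1}`. -/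
def coderivNorm {Z Y : Type*} [NormedAddCommGroup Z] [NormedSpace ℝ Z]
    [NormedAddCommGroup Y] [NormedSpace ℝ Y]
    (G : Set (Z × Y)) (yb : Y) : ℝ≥0∞ :=
  ⨆ zs ∈ {zs : Z →L[ℝ] ℝ | ∃ ys : Y →L[ℝ] ℝ, ‖ys‖ ≤ 1 ∧ coderivMem G yb ys zs},
    (‖zs‖₊ : ℝ≥0∞)

/-- Weak* closure of a subset of `X* × ℝ`. -/
def wclosure2 (S : Set ((X →L[ℝ] ℝ) × ℝ)) : Set ((X →L[ℝ] ℝ) × ℝ) :=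
  {q | ((StrongDual.toWeakDual q.1 : WeakDual ℝ X), q.2) ∈
    closure ((fun w : (X →L[ℝ] ℝ) × ℝ =>
      ((StrongDual.toWeakDual w.1 : WeakDual ℝ X), w.2)) '' S)}

/-- Weak* closure of a subset of `l_∞(T)* × X* × ℝ` (the dual of `l_∞(T) × X × ℝ`). -/
def wclosure3 (S : Set ((Linf T →L[ℝ] ℝ) × ((X →L[ℝ] ℝ) × ℝ))) :
    Set ((Linf T →L[ℝ] ℝ) × ((X →L[ℝ] ℝ) × ℝ)) :=
  {q | ((StrongDual.toWeakDual q.1 : WeakDual ℝ (Linf T)),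
        ((StrongDual.toWeakDual q.2.1 : WeakDual ℝ X), q.2.2)) ∈
    closure ((fun w : (Linf T →L[ℝ] ℝ) × ((X →L[ℝ] ℝ) × ℝ) =>
      ((StrongDual.toWeakDual w.1 : WeakDual ℝ (Linf T)),
        ((StrongDual.toWeakDual w.2.1 : WeakDual ℝ X), w.2.2))) '' S)}

/-- Convex conic hull. -/
def coneHull {V : Type*} [AddCommMonoid V] [Module ℝ V] (S : Set V) : Set V :=
  {x | ∃ r : ℝ, 0 ≤ r ∧ ∃ y ∈ convexHull ℝ S, x = r • y}

/-- `C(p) = co(⋃ₜ gph (f_t − p_t)*)`. -/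
def Cset (f : T → X → EReal) (p : Linf T) : Set ((X →L[ℝ] ℝ) × ℝ) :=
  convexHull ℝ (⋃ t : T, gphConj (fun x => f t x - ((p t : ℝ) : EReal)))

/-- `H(p) = co(⋃ₜ epi (f_t − p_t)*)`. -/
def Hset (f : T → X → EReal) (p : Linf T) : Set ((X →L[ℝ] ℝ) × ℝ) :=
  convexHull ℝ (⋃ t : T, epiConj (fun x => f t x - ((p t : ℝ) : EReal)))

/-- Strong Slater condition for `σ(p)`. -/
def SSC (f : T → X → EReal) (p : Linf T) : Prop :=
  ∃ xh : X, (⨆ t : T, (f t xh - ((p t : ℝ) : EReal))) < 0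

/-- `x̂` is a strong Slater point for `σ(0)`. -/
def StrongSlaterPt (f : T → X → EReal) (xh : X) : Prop :=
  (⨆ t : T, f t xh) < 0


variable {X : Type*} [NormedAddCommGroup X] [NormedSpace ℝ X] {T : Type*}

/-- The index set `T̃ = {(t, u*) : u* ∈ dom f_t*}` of the linearized system. -/
def Ttilde (f : T → X → EReal) : Type _ :=
  {s : T × (X →L[ℝ] ℝ) // s.2 ∈ domConj (f s.1)}

/-- The linearized feasible solution map `F̃(ρ)`. -/
def feasTilde (f : T → X → EReal) (ρ : Linf (Ttilde f)) : Set X :=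
  {x | ∀ s : Ttilde f, ((s.1.2 x : ℝ) : EReal) - conj (f s.1.1) s.1.2 ≤ ((ρ s : ℝ) : EReal)}

/-- The embedding `p ↦ ρ_p`, `ρ_p(t, u*) = p_t`. -/
def rhoP (f : T → X → EReal) (p : Linf T) : Linf (Ttilde f) :=
  ⟨fun s => p s.1.1, memℓp_infty
    ⟨‖p‖, by rintro r ⟨s, rfl⟩; exact lp.norm_apply_le_norm ENNReal.top_ne_zero p s.1.1⟩⟩

/-- The subdifferential of convex analysis of `g` at `x`. -/
def subdiff (g : X → EReal) (x : X) : Set (X →L[ℝ] ℝ) :=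
  {u | ∀ y, ((u y - u x : ℝ) : EReal) ≤ g y - g x}

end



/-!
Suppose the point lies outside the weak* closure of the cone. The dual of
`l_∞(T)* × X* × ℝ` with its weak* topology is `l_∞(T) × X × ℝ`, so Hahn–Banach yields
`(p, x, r)` with `p_t ≤ ⟨u, x⟩ + r f_t*(u)` for all `t` and `u ∈ dom f_t*`, while
`∇φ(0, x̄)(-p, -(x + r x̄)) < 0`. Since `f_t(x̄) ≤ 0` and `f_t ≤ f_t**` (Fenchel–Moreau), these
inequalities put `(0, x̄) + s (-p, -(x + r x̄))` in `gph F` whenever `0 ≤ s` and `s r ≤ 1`.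
So `(-p, -(x + r x̄))` is a feasible direction at the local minimizer `(0, x̄)`, and first-order
optimality gives `∇φ(0, x̄)(-p, -(x + r x̄)) ≥ 0`, a contradiction.
-/

theorem WeakDual.exists_eq_eval {𝕜 E : Type*} [NontriviallyNormedField 𝕜] [AddCommGroup E]
    [TopologicalSpace E] [Module 𝕜 E] [ContinuousConstSMul 𝕜 E]
    (F : StrongDual 𝕜 (WeakDual 𝕜 E)) : ∃ x : E, ∀ u : WeakDual 𝕜 E, F u = u x := by
  obtain ⟨x, rfl⟩ := LinearMap.dualEmbedding_surjective (topDualPairing 𝕜 E) F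
  exact ⟨x, fun u => rfl⟩

instance WeakDual.instLocallyConvexSpace {E : Type*} [AddCommGroup E] [TopologicalSpace E]
    [Module ℝ E] : LocallyConvexSpace ℝ (WeakDual ℝ E) :=
  WeakBilin.locallyConvexSpace

section ConeHull

variable {V : Type*} [AddCommGroup V] [Module ℝ V] {S : Set V}

theorem convex_coneHull : Convex ℝ (coneHull S) := by
  rintro _ ⟨r₁, hr₁, y₁, hy₁, rfl⟩ _ ⟨r₂, hr₂, y₂, hy₂, rfl⟩ a b ha hb -
  obtain ⟨z, hz, hz_eq⟩ := (convex_convexHull ℝ S).exists_mem_add_smul_eq hy₁ hy₂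
    (mul_nonneg ha hr₁) (mul_nonneg hb hr₂)
  exact ⟨_, add_nonneg (mul_nonneg ha hr₁) (mul_nonneg hb hr₂), z, hz, by
    rw [hz_eq, smul_smul, smul_smul]⟩

theorem smul_mem_coneHull {w : V} (hw : w ∈ S) {c : ℝ} (hc : 0 ≤ c) : c • w ∈ coneHull S :=
  ⟨c, hc, w, subset_convexHull ℝ S hw, rfl⟩

theorem exists_nonneg_of_notMem_closure_image_coneHull {P : Type*} [AddCommGroup P] [Module ℝ P]
    [TopologicalSpace P] [IsTopologicalAddGroup P] [ContinuousSMul ℝ P] [LocallyConvexSpace ℝ P]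
    (e : V →ₗ[ℝ] P) (hS : S.Nonempty) {v : V} (hv : e v ∉ closure (e '' coneHull S)) :
    ∃ F : StrongDual ℝ P, (∀ w ∈ S, 0 ≤ F (e w)) ∧ F (e v) < 0 := by
  obtain ⟨F, u, hFv, hF⟩ := geometric_hahn_banach_point_closed
    (convex_coneHull.linear_image e).closure isClosed_closure hv
  have hF_smul : ∀ w ∈ S, ∀ c : ℝ, 0 ≤ c → u < c * F (e w) := fun w hw c hc => by
    simpa using hF _ (subset_closure ⟨_, smul_mem_coneHull hw hc, rfl⟩)
  have hu : u < 0 := by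
    obtain ⟨w, hw⟩ := hS
    simpa using hF_smul w hw 0 le_rfl
  refine ⟨F, fun w hw => ?_, hFv.trans hu⟩
  by_contra! hneg
  simpa [div_mul_cancel₀ u hneg.ne] using
    hF_smul w hw (u / F (e w)) (div_nonneg_of_nonpos hu.le hneg.le)

end ConeHull

theorem exists_pairing_neg_of_notMem_wclosure3 {T X : Type*} [NormedAddCommGroup X]
    [NormedSpace ℝ X] {S : Set ((Linf T →L[ℝ] ℝ) × ((X →L[ℝ] ℝ) × ℝ))} (hS : S.Nonempty)
    {q : (Linf T →L[ℝ] ℝ) × ((X →L[ℝ] ℝ) × ℝ)} (hq : q ∉ wclosure3 (coneHull S)) :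
    ∃ (p : Linf T) (x : X) (r : ℝ),
      (∀ w ∈ S, 0 ≤ w.1 p + w.2.1 x + w.2.2 * r) ∧ q.1 p + q.2.1 x + q.2.2 * r < 0 := by
  let e : (Linf T →L[ℝ] ℝ) × ((X →L[ℝ] ℝ) × ℝ) →ₗ[ℝ]
      WeakDual ℝ (Linf T) × (WeakDual ℝ X × ℝ) :=
    StrongDual.toWeakDual.toLinearMap.prodMap
      (StrongDual.toWeakDual.toLinearMap.prodMap LinearMap.id)
  obtain ⟨F, hFS, hFq⟩ := exists_nonneg_of_notMem_closure_image_coneHull e hS hq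
  obtain ⟨p, hp⟩ := WeakDual.exists_eq_eval (F.comp (.inl ℝ _ _))
  obtain ⟨x, hx⟩ := WeakDual.exists_eq_eval ((F.comp (.inr ℝ _ _)).comp (.inl ℝ _ _))
  have hF : ∀ w, F (e w) = w.1 p + w.2.1 x + w.2.2 * F (0, 0, 1) := fun w => by
    rw [← F.comp_inl_add_comp_inr, ← (F.comp (.inr ℝ _ _)).comp_inl_add_comp_inr]
    have h1 : F ((e w).1, 0) = w.1 p := hp (e w).1
    have h2 : F (0, (e w).2.1, 0) = w.2.1 x := hx (e w).2.1
    have h3 : F (0, 0, (e w).2.2) = w.2.2 * F (0, 0, 1) :=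
      (by simpa using F.map_smul w.2.2 (0, 0, 1) : F (0, 0, w.2.2) = _)
    simp only [ContinuousLinearMap.comp_apply, ContinuousLinearMap.inl_apply,
      ContinuousLinearMap.inr_apply, h1, h2, h3, add_assoc]
  exact ⟨p, x, F (0, 0, 1), fun w hw => hF w ▸ hFS w hw, hF q ▸ hFq⟩

section Epigraph

variable {Y : Type*} {g : Y → EReal}

def realEpigraph (g : Y → EReal) : Set (Y × ℝ) := {q | g q.1 ≤ q.2}

theorem LowerSemicontinuous.isClosed_realEpigraph [TopologicalSpace Y]
    (hl : LowerSemicontinuous g) : IsClosed (realEpigraph g) :=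
  hl.isClosed_epigraph.preimage
    (continuous_fst.prodMk (continuous_coe_real_ereal.comp continuous_snd))

theorem ErealConvexOn.convex_realEpigraph [NormedAddCommGroup Y] [NormedSpace ℝ Y]
    (hc : ErealConvexOn g) : Convex ℝ (realEpigraph g) := by
  rintro ⟨y₁, γ₁⟩ h₁ ⟨y₂, γ₂⟩ h₂ a b ha hb hab
  calc g (a • y₁ + b • y₂) ≤ a * g y₁ + b * g y₂ := hc y₁ y₂ a b ha hb hab
    _ ≤ a * γ₁ + b * γ₂ := add_le_add (mul_le_mul_of_nonneg_left h₁ (EReal.coe_nonneg.2 ha))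
        (mul_le_mul_of_nonneg_left h₂ (EReal.coe_nonneg.2 hb))
    _ = (a * γ₁ + b * γ₂ : ℝ) := by norm_cast

end Epigraph

section Conjugate

variable {Y : Type*} [NormedAddCommGroup Y] [NormedSpace ℝ Y] {g : Y → EReal}

theorem sub_le_conj (g : Y → EReal) (u : Y →L[ℝ] ℝ) (y : Y) : (u y : EReal) - g y ≤ conj g u :=
  le_iSup (fun y => (u y : EReal) - g y) y

theorem conj_le_coe (hbot : ∀ y, g y ≠ ⊥) {u : Y →L[ℝ] ℝ} {β : ℝ}
    (h : ∀ y, g y ≠ ⊤ → u y - (g y).toReal ≤ β) : conj g u ≤ β := by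
  refine iSup_le fun y => ?_
  by_cases hy : g y = ⊤
  · simp [hy]
  · rw [← EReal.coe_toReal hy (hbot y)]
    exact_mod_cast h y hy

theorem conj_ne_bot (hp : ErealProper g) (u : Y →L[ℝ] ℝ) : conj g u ≠ ⊥ := by
  obtain ⟨y, hy⟩ := hp.2
  refine ne_bot_of_le_ne_bot ?_ (sub_le_conj g u y)
  rw [← EReal.coe_toReal hy (hp.1 y)]
  exact EReal.coe_ne_bot _

theorem coe_toReal_conj (hp : ErealProper g) {u : Y →L[ℝ] ℝ} (hu : u ∈ domConj g) :
    ((conj g u).toReal : EReal) = conj g u :=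
  EReal.coe_toReal hu.ne (conj_ne_bot hp u)

theorem mem_domConj_of_conj_le_coe {u : Y →L[ℝ] ℝ} {β : ℝ} (hu : conj g u ≤ β) :
    u ∈ domConj g :=
  hu.trans_lt (EReal.coe_lt_top β)

theorem conj_toReal_le (hp : ErealProper g) {u : Y →L[ℝ] ℝ} {β : ℝ} (hu : conj g u ≤ β) :
    (conj g u).toReal ≤ β :=
  EReal.toReal_le_toReal hu (conj_ne_bot hp u) (EReal.coe_ne_top β)

theorem sub_le_conj_toReal (hp : ErealProper g) {u : Y →L[ℝ] ℝ} (hu : u ∈ domConj g) {y : Y}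
    (hy : g y ≠ ⊤) : u y - (g y).toReal ≤ (conj g u).toReal := by
  have h := sub_le_conj g u y
  rwa [← EReal.coe_toReal hy (hp.1 y), ← coe_toReal_conj hp hu, ← EReal.coe_sub,
    EReal.coe_le_coe_iff] at h

theorem exists_separation_of_coe_lt (hdom : ∃ y, g y ≠ ⊤) (hl : LowerSemicontinuous g)
    (hc : ErealConvexOn g) {z : Y} {c : ℝ} (hzc : (c : EReal) < g z) :
    ∃ (ψ : Y →L[ℝ] ℝ) (c₀ u₀ : ℝ), 0 ≤ c₀ ∧ ψ z + c₀ * c < u₀ ∧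
      ∀ y : Y, ∀ γ : ℝ, g y ≤ γ → u₀ < ψ y + c₀ * γ := by
  obtain ⟨Φ, u₀, hΦz, hΦ⟩ := geometric_hahn_banach_point_closed hc.convex_realEpigraph
    hl.isClosed_realEpigraph (show (z, c) ∉ realEpigraph g from not_le.2 hzc)
  set ψ := Φ.comp (.inl ℝ Y ℝ)
  set c₀ := Φ (0, 1)
  have hΦ_apply : ∀ y γ, Φ (y, γ) = ψ y + c₀ * γ := fun y γ => by
    have h := Φ.map_smul γ ((0 : Y), (1 : ℝ))
    simp only [Prod.smul_mk, smul_zero, smul_eq_mul, mul_one] at h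
    rw [← Φ.comp_inl_add_comp_inr]
    simp [ψ, c₀, h, mul_comm]
  have hsep : ∀ y : Y, ∀ γ : ℝ, g y ≤ γ → u₀ < ψ y + c₀ * γ := fun y γ h => by
    simpa [hΦ_apply] using hΦ (y, γ) h
  refine ⟨ψ, c₀, u₀, ?_, by simpa [hΦ_apply] using hΦz, hsep⟩
  by_contra! hc₀
  obtain ⟨y, hy⟩ := hdom
  set γ := (g y).toReal
  -- the epigraph is closed upwards: raise `γ` by `t` until the functional drops to `u₀`
  set t := (ψ y + c₀ * γ - u₀) / -c₀
  have ht : 0 ≤ t := div_nonneg (by linarith [hsep y γ (EReal.le_coe_toReal hy)]) (by linarith)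
  have h := hsep y (γ + t)
    ((EReal.le_coe_toReal hy).trans (by exact_mod_cast le_add_of_nonneg_right ht))
  have hct : c₀ * t = -(ψ y + c₀ * γ - u₀) := by
    have : c₀ ≠ 0 := hc₀.ne
    simp only [t]; field_simp
  linarith

theorem conj_neg_inv_smul_le (hp : ErealProper g) {ψ : Y →L[ℝ] ℝ} {c₀ u₀ : ℝ} (hc₀ : 0 < c₀)
    (hsep : ∀ y : Y, ∀ γ : ℝ, g y ≤ γ → u₀ < ψ y + c₀ * γ) :
    conj g (-c₀⁻¹ • ψ) ≤ (-u₀ / c₀ : ℝ) := by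
  refine conj_le_coe hp.1 fun y hy => ?_
  have h := hsep y _ (EReal.le_coe_toReal hy)
  rw [smul_apply, smul_eq_mul, le_div_iff₀ hc₀]
  field_simp
  linarith

theorem exists_mem_domConj (hp : ErealProper g) (hl : LowerSemicontinuous g)
    (hc : ErealConvexOn g) : (domConj g).Nonempty := by
  obtain ⟨y, hy⟩ := hp.2
  have hlt : (((g y).toReal - 1 : ℝ) : EReal) < g y := by
    rw [← EReal.coe_toReal hy (hp.1 y)]
    exact_mod_cast sub_one_lt _
  obtain ⟨ψ, c₀, u₀, -, hz, hsep⟩ := exists_separation_of_coe_lt hp.2 hl hc hlt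
  have hc₀ : 0 < c₀ := by
    have := hsep y _ (EReal.le_coe_toReal hy)
    nlinarith
  exact ⟨_, mem_domConj_of_conj_le_coe (conj_neg_inv_smul_le hp hc₀ hsep)⟩

/-- The inequality `g ≤ g**` behind the Fenchel–Moreau theorem. -/
theorem le_coe_of_forall_mem_domConj (hp : ErealProper g) (hl : LowerSemicontinuous g)
    (hc : ErealConvexOn g) {z : Y} {c : ℝ}
    (h : ∀ u ∈ domConj g, u z - (conj g u).toReal ≤ c) : g z ≤ c := by
  by_contra! hzc
  obtain ⟨ψ, c₀, u₀, hc₀_nonneg, hz, hsep⟩ := exists_separation_of_coe_lt hp.2 hl hc hzc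
  rcases hc₀_nonneg.lt_or_eq with hc₀ | rfl
  · have hconj := conj_neg_inv_smul_le hp hc₀ hsep
    have h' := h _ (mem_domConj_of_conj_le_coe hconj)
    have hconj_real := conj_toReal_le hp hconj
    rw [smul_apply, smul_eq_mul] at h'
    have : c < -c₀⁻¹ * ψ z - -u₀ / c₀ := by
      rw [← sub_pos]; field_simp; linarith
    linarith
  · -- vertical hyperplane: tilt a continuous affine minorant `v` of `g` by a multiple of `ψ`
    obtain ⟨v, hv⟩ := exists_mem_domConj hp hl hc
    simp only [zero_mul, add_zero] at hz hsep
    set lam := max 0 ((c - (v z - (conj g v).toReal) + 1) / (u₀ - ψ z))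
    have hlam₀ : 0 ≤ lam := le_max_left _ _
    have hlam : c - (v z - (conj g v).toReal) + 1 ≤ lam * (u₀ - ψ z) :=
      (div_le_iff₀ (by linarith)).1 (le_max_right _ _)
    have hconj : conj g (v - lam • ψ) ≤ ((conj g v).toReal - lam * u₀ : ℝ) :=
      conj_le_coe hp.1 fun y hy => by
        have h₁ := sub_le_conj_toReal hp hv hy
        have h₂ := hsep y _ (EReal.le_coe_toReal hy)
        simp only [sub_apply, smul_apply, smul_eq_mul]
        nlinarith
    have h' := h _ (mem_domConj_of_conj_le_coe hconj)
    have hconj_real := conj_toReal_le hp hconj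
    simp only [sub_apply, smul_apply, smul_eq_mul] at h'
    linarith

end Conjugate

theorem apply_sub_smul_le_of_forall_mem_domConj {Y : Type*} [NormedAddCommGroup Y]
    [NormedSpace ℝ Y] {g : Y → EReal} (hp : ErealProper g) (hl : LowerSemicontinuous g)
    (hc : ErealConvexOn g)
    {xb x : Y} {π r s : ℝ} (hxb : g xb ≤ 0)
    (hπ : ∀ u ∈ domConj g, π ≤ u x + (conj g u).toReal * r) (hs : 0 ≤ s) (hsr : s * r ≤ 1) :
    g (xb - s • (x + r • xb)) ≤ (-(s * π) : ℝ) := by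
  have hxb_top : g xb ≠ ⊤ := ne_top_of_le_ne_top EReal.zero_ne_top hxb
  have hxb_real : (g xb).toReal ≤ 0 := by
    simpa using EReal.toReal_le_toReal hxb (hp.1 xb) EReal.zero_ne_top
  refine le_coe_of_forall_mem_domConj hp hl hc fun u hu => ?_
  have h₁ := sub_le_conj_toReal hp hu hxb_top
  have h₂ := mul_le_mul_of_nonneg_left (hπ u hu) hs
  -- `u (xb - s • (x + r • xb)) - g* u + s π ≤ (1 - s r) (u xb - g* u) ≤ 0`
  have h₃ : (1 - s * r) * (u xb - (conj g u).toReal) ≤ 0 :=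
    mul_nonpos_of_nonneg_of_nonpos (by linarith) (by linarith)
  simp only [map_sub, map_smul, map_add, smul_eq_mul]
  nlinarith

theorem add_smul_mem_feasGraph {T X : Type*} [NormedAddCommGroup X] [NormedSpace ℝ X]
    {f : T → X → EReal} (hproper : ∀ t, ErealProper (f t))
    (hlsc : ∀ t, LowerSemicontinuous (f t)) (hconv : ∀ t, ErealConvexOn (f t))
    {xb : X} (hxb : xb ∈ feas f 0) {p : Linf T} {x : X} {r : ℝ}
    (hdual : ∀ t, ∀ u ∈ domConj (f t), p t ≤ u x + (conj (f t) u).toReal * r)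
    {s : ℝ} (hs : 0 ≤ s) (hsr : s * r ≤ 1) :
    ((0 : Linf T), xb) + s • (-p, -(x + r • xb)) ∈ feasGraph f := fun t => by
  have h := apply_sub_smul_le_of_forall_mem_domConj (hproper t) (hlsc t) (hconv t)
    (by simpa using hxb t) (hdual t) hs hsr
  have hcoord : (((0 : Linf T), xb) + s • (-p, -(x + r • xb))).1 t = -(s * p t) := by
    simp only [Prod.fst_add, Prod.smul_fst, zero_add, lp.coeFn_smul, lp.coeFn_neg, Pi.smul_apply,
      Pi.neg_apply, smul_eq_mul, mul_neg]
  have hpoint : (((0 : Linf T), xb) + s • (-p, -(x + r • xb))).2 = xb - s • (x + r • xb) := by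
    simp [sub_eq_add_neg]
  show f t _ ≤ _
  rwa [hcoord, hpoint]

theorem mem_posTangentConeAt_feasGraph {T X : Type*} [NormedAddCommGroup X] [NormedSpace ℝ X]
    {f : T → X → EReal} (hproper : ∀ t, ErealProper (f t))
    (hlsc : ∀ t, LowerSemicontinuous (f t)) (hconv : ∀ t, ErealConvexOn (f t))
    {xb : X} (hxb : xb ∈ feas f 0) {p : Linf T} {x : X} {r : ℝ}
    (hdual : ∀ t, ∀ u ∈ domConj (f t), p t ≤ u x + (conj (f t) u).toReal * r) :
    (-p, -(x + r • xb)) ∈ posTangentConeAt (feasGraph f) ((0 : Linf T), xb) := by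
  refine mem_posTangentConeAt_of_frequently_mem (Eventually.frequently ?_)
  have hsr : ∀ᶠ s in nhds (0 : ℝ), s * r < 1 :=
    ((continuous_mul_const r).tendsto 0).eventually (eventually_lt_nhds (by simp))
  filter_upwards [eventually_nhdsWithin_of_eventually_nhds hsr, self_mem_nhdsWithin]
    with s hs_r hs_pos
  exact add_smul_mem_feasGraph hproper hlsc hconv hxb hdual (le_of_lt hs_pos) hs_r.le

theorem stmt_9_general {T : Type*} [Nonempty T]
    {X : Type*} [NormedAddCommGroup X] [NormedSpace ℝ X]
    (f : T → X → EReal)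
    (hproper : ∀ t, ErealProper (f t))
    (hlsc : ∀ t, LowerSemicontinuous (f t))
    (hconv : ∀ t, ErealConvexOn (f t))
    (xb : X) (hxb : xb ∈ feas f 0)
    (φ : Linf T × X → ℝ) (D : Linf T × X →L[ℝ] ℝ)
    (hD : HasFDerivAt φ D ((0 : Linf T), xb))
    (hmin : ∃ W ∈ nhds ((0 : Linf T), xb), ∀ q ∈ W, q.2 ∈ feas f q.1 → φ (0, xb) ≤ φ q) :
    (-(D.comp (ContinuousLinearMap.inl ℝ (Linf T) X)),
      (-(D.comp (ContinuousLinearMap.inr ℝ (Linf T) X)),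
        -((D.comp (ContinuousLinearMap.inr ℝ (Linf T) X)) xb))) ∈
      wclosure3 (coneHull (⋃ t : T,
      ({-(dirac T t)} : Set (Linf T →L[ℝ] ℝ)) ×ˢ gphConj (f t))) := by
  by_contra hq
  set S := ⋃ t : T, ({-(dirac T t)} : Set (Linf T →L[ℝ] ℝ)) ×ˢ gphConj (f t)
  have hmemS : ∀ t, ∀ u ∈ domConj (f t), (-(dirac T t), u, (conj (f t) u).toReal) ∈ S :=
    fun t u hu => Set.mem_iUnion.2 ⟨t, Set.mem_singleton _, (coe_toReal_conj (hproper t) hu).symm⟩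
  have hS : S.Nonempty := by
    obtain ⟨t⟩ := ‹Nonempty T›
    obtain ⟨u, hu⟩ := exists_mem_domConj (hproper t) (hlsc t) (hconv t)
    exact ⟨_, hmemS t u hu⟩
  obtain ⟨p, x, r, hS_sep, hq_sep⟩ := exists_pairing_neg_of_notMem_wclosure3 hS hq
  have hdual : ∀ t, ∀ u ∈ domConj (f t), p t ≤ u x + (conj (f t) u).toReal * r := by
    intro t u hu
    have h := hS_sep _ (hmemS t u hu)
    change 0 ≤ -(p t) + _ + _ at h
    linarith
  have hlocmin : IsLocalMinOn φ (feasGraph f) (0, xb) := by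
    obtain ⟨W, hW, hWmin⟩ := hmin
    exact Filter.mem_of_superset (inter_mem_nhdsWithin _ hW) fun q hq => hWmin q hq.2 hq.1
  have hD_nonneg := hlocmin.hasFDerivWithinAt_nonneg hD.hasFDerivWithinAt
    (mem_posTangentConeAt_feasGraph hproper hlsc hconv hxb hdual)
  rw [← D.comp_inl_add_comp_inr] at hD_nonneg
  simp only [ContinuousLinearMap.comp_apply, ContinuousLinearMap.inl_apply,
    ContinuousLinearMap.inr_apply, neg_apply, map_neg, map_add, map_smul, smul_eq_mul]
    at hD_nonneg hq_sep
  linarith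

theorem stmt_9 {T : Type*} [Nonempty T]
    {X : Type*} [NormedAddCommGroup X] [NormedSpace ℝ X] [CompleteSpace X]
    (f : T → X → EReal)
    (hproper : ∀ t, ErealProper (f t))
    (hlsc : ∀ t, LowerSemicontinuous (f t))
    (hconv : ∀ t, ErealConvexOn (f t))
    (xb : X) (hxb : xb ∈ feas f 0)
    (φ : Linf T × X → ℝ) (D : Linf T × X →L[ℝ] ℝ)
    (hD : HasFDerivAt φ D ((0 : Linf T), xb))
    (hmin : ∃ W ∈ nhds ((0 : Linf T), xb), ∀ q ∈ W, q.2 ∈ feas f q.1 → φ (0, xb) ≤ φ q) :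
    (-(D.comp (ContinuousLinearMap.inl ℝ (Linf T) X)),
      (-(D.comp (ContinuousLinearMap.inr ℝ (Linf T) X)),
        -((D.comp (ContinuousLinearMap.inr ℝ (Linf T) X)) xb))) ∈
      wclosure3 (coneHull (⋃ t : T,
      ({-(dirac T t)} : Set (Linf T →L[ℝ] ℝ)) ×ˢ gphConj (f t))) :=
  stmt_9_general f hproper hlsc hconv xb hxb φ D hD hmin
end

section
/- Assume F(0) ≠ ∅. Then the following statements are equivalent: (i) σ(0) satisfies the strong Slater condition; (ii) 0 ∈ int(dom F), where dom F = {p ∈ l_∞(T) : F(p) ≠ ∅}; (iii) F is Lipschitz-like around (0, x) for every x ∈ F(0); (iv) (0, 0) ∉ cl* H(0); (v) (0, 0) ∉ cl* C(0). -/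
open Filter
open scoped ENNReal

/-!
(i) ⇒ (ii), (iii): a strong Slater point `x̂` with `f_t(x̂) ≤ c < 0` stays feasible for every
`‖p‖ < -c`, and moving `y ∈ F(p)` towards `x̂` by the fraction `θ = 2‖p - q‖ / (-c)` lands in
`F(q)`, which is the Aubin estimate. Conversely (iii) ⇒ (ii) ⇒ (i) by testing with the constant
perturbation `-ε/2`.

(i) ⇒ (iv): every `(u*, β) ∈ H(0)` satisfies `⟨u*, x̂⟩ - β ≤ c`, a weak*-closed condition.
(iv) ⇒ (v) because `C(0) ⊆ H(0)`.

(v) ⇒ (i): the weak*-continuous functionals on `X* × ℝ` are `(u*, γ) ↦ ⟨u*, x⟩ + rγ`, so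
Hahn–Banach separates `(0, 0)` from `C(0)` by some `(x, r)`. Together with `⟨u*, x₀⟩ ≤ f_t*(u*)`
for a feasible `x₀`, this bounds `⟨u*, x̂⟩ - f_t*(u*)` uniformly by a negative constant on every
`gph f_t*` for a suitable `x̂`, and the Fenchel–Moreau theorem turns that into `f_t(x̂) < 0`.
-/

section WeakStar

variable {X : Type*} [NormedAddCommGroup X] [NormedSpace ℝ X]

lemma exists_forall_lt_of_notMem_wclosure2 {S : Set ((X →L[ℝ] ℝ) × ℝ)} (hS : Convex ℝ S)
    (h0 : ((0 : X →L[ℝ] ℝ), (0 : ℝ)) ∉ wclosure2 S) :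
    ∃ (x : X) (r δ : ℝ), 0 < δ ∧ ∀ q ∈ S, δ < q.1 x + r * q.2 := by
  let L : (X →L[ℝ] ℝ) × ℝ →ₗ[ℝ] WeakDual ℝ X × ℝ :=
    StrongDual.toWeakDual.toLinearMap.prodMap LinearMap.id
  have : LocallyConvexSpace ℝ (WeakDual ℝ X) := WeakBilin.locallyConvexSpace
  have h0' : (0 : WeakDual ℝ X × ℝ) ∉ closure (L '' S) := by
    rwa [show (0 : WeakDual ℝ X × ℝ) = (StrongDual.toWeakDual 0, 0) by rw [map_zero]; rfl]
  obtain ⟨φ, δ, hφ0, hφ⟩ :=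
    geometric_hahn_banach_point_closed (hS.linear_image L).closure isClosed_closure h0'
  obtain ⟨x, hx⟩ := LinearMap.dualEmbedding_surjective (topDualPairing ℝ X)
    (φ.comp (ContinuousLinearMap.inl ℝ (WeakDual ℝ X) ℝ))
  refine ⟨x, φ (0, 1), δ, by simpa using hφ0, fun q hq => ?_⟩
  have hsplit : L q = (StrongDual.toWeakDual q.1, 0) + q.2 • (0, 1) := by
    simp [L]
  have hx' : φ (StrongDual.toWeakDual q.1, 0) = q.1 x :=
    (DFunLike.congr_fun hx (StrongDual.toWeakDual q.1)).symm
  have := hφ (L q) (subset_closure ⟨q, hq, rfl⟩)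
  rwa [hsplit, map_add, map_smul, hx', smul_eq_mul, mul_comm] at this

lemma forall_mem_wclosure2_le {S : Set ((X →L[ℝ] ℝ) × ℝ)} {x : X} {r c : ℝ}
    (h : ∀ q ∈ S, q.1 x + r * q.2 ≤ c) : ∀ q ∈ wclosure2 S, q.1 x + r * q.2 ≤ c := by
  intro q hq
  have hclosed : IsClosed {w : WeakDual ℝ X × ℝ | w.1 x + r * w.2 ≤ c} :=
    isClosed_le (((WeakBilin.eval_continuous _ x).comp continuous_fst).add
      (continuous_const.mul continuous_snd)) continuous_const
  refine closure_minimal ?_ hclosed hq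
  rintro _ ⟨q', hq', rfl⟩
  exact h q' hq'

lemma wclosure2_mono {S S' : Set ((X →L[ℝ] ℝ) × ℝ)} (h : S ⊆ S') :
    wclosure2 S ⊆ wclosure2 S' := by
  intro q hq
  simp only [wclosure2, Set.mem_ofPred_eq] at hq ⊢
  exact closure_mono (Set.image_mono h) hq

end WeakStar

section Conjugate

lemma LowerSemicontinuous.isClosed_realEpigraph_s11 {α : Type*} [TopologicalSpace α] {g : α → EReal}
    (hlsc : LowerSemicontinuous g) : IsClosed {q : α × ℝ | g q.1 ≤ q.2} :=
  hlsc.isClosed_epigraph.preimage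
    (continuous_fst.prodMk (continuous_coe_real_ereal.comp continuous_snd))

variable {X : Type*} [NormedAddCommGroup X] [NormedSpace ℝ X] {g : X → EReal}

lemma apply_sub_le_conj_of_le (u : X →L[ℝ] ℝ) {x : X} {c : ℝ} (h : g x ≤ c) :
    ((u x - c : ℝ) : EReal) ≤ conj g u :=
  calc ((u x - c : ℝ) : EReal) = (u x : EReal) - c := EReal.coe_sub _ _
    _ ≤ (u x : EReal) - g x := EReal.sub_le_sub le_rfl h
    _ ≤ conj g u := le_iSup (fun x => (u x : EReal) - g x) x

lemma conj_le_of_forall (hbot : ∀ x, g x ≠ ⊥) {u : X →L[ℝ] ℝ} {α : ℝ}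
    (h : ∀ x (μ : ℝ), g x ≤ μ → u x - μ ≤ α) : conj g u ≤ α := by
  refine iSup_le fun x => ?_
  cases hgx : g x with
  | bot => exact absurd hgx (hbot x)
  | top => simp
  | coe μ => exact_mod_cast h x μ hgx.le

lemma exists_mem_gphConj_of_conj_le (hproper : ErealProper g) {u : X →L[ℝ] ℝ} {β : ℝ}
    (h : conj g u ≤ β) : ∃ γ ≤ β, (u, γ) ∈ gphConj g := by
  obtain ⟨x₀, hx₀⟩ := hproper.2
  have hbot : conj g u ≠ ⊥ := by
    lift g x₀ to ℝ using ⟨hx₀, hproper.1 x₀⟩ with m hm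
    exact ne_bot_of_le_ne_bot (EReal.coe_ne_bot _) (apply_sub_le_conj_of_le u hm.symm.le)
  lift conj g u to ℝ using ⟨ne_top_of_le_ne_top (EReal.coe_ne_top β) h, hbot⟩ with γ hγ
  exact ⟨γ, by exact_mod_cast h, hγ.symm⟩

lemma ErealConvexOn.convex_realEpigraph_s11 (hconv : ErealConvexOn g) :
    Convex ℝ {q : X × ℝ | g q.1 ≤ q.2} := by
  rintro ⟨x, μ⟩ hx ⟨y, ν⟩ hy a b ha hb hab
  calc g (a • x + b • y) ≤ (a : EReal) * g x + (b : EReal) * g y := hconv x y a b ha hb hab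
    _ ≤ (a : EReal) * μ + (b : EReal) * ν :=
        add_le_add (mul_le_mul_of_nonneg_left hx (EReal.coe_nonneg.mpr ha))
          (mul_le_mul_of_nonneg_left hy (EReal.coe_nonneg.mpr hb))
    _ = ((a * μ + b * ν : ℝ) : EReal) := by push_cast; rfl

lemma exists_separation_realEpigraph (hproper : ErealProper g) (hlsc : LowerSemicontinuous g)
    (hconv : ErealConvexOn g) {y : X} {c : ℝ} (h : ¬ g y ≤ c) :
    (∃ (u : X →L[ℝ] ℝ) (α : ℝ), (∀ x (μ : ℝ), g x ≤ μ → u x - μ < α) ∧ α < u y - c) ∨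
      ∃ (u : X →L[ℝ] ℝ) (α : ℝ), (∀ x (μ : ℝ), g x ≤ μ → u x < α) ∧ α < u y := by
  obtain ⟨φ, α, hφ, hφy⟩ := geometric_hahn_banach_closed_point hconv.convex_realEpigraph_s11
    hlsc.isClosed_realEpigraph_s11 (x := (y, c)) h
  set u := φ.comp (ContinuousLinearMap.inl ℝ X ℝ)
  set s := φ (0, 1)
  have hφ_apply : ∀ x μ, φ (x, μ) = u x + s * μ := fun x μ => by
    rw [← add_zero x, ← zero_add μ, ← Prod.mk_add_mk, map_add, show ((0 : X), μ) = μ • (0, 1) by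
      simp, map_smul, smul_eq_mul, mul_comm]
    simp [u, s]
  have hsep : ∀ x (μ : ℝ), g x ≤ μ → u x + s * μ < α := fun x μ hxμ =>
    hφ_apply x μ ▸ hφ (x, μ) hxμ
  rw [hφ_apply] at hφy
  obtain ⟨x₀, hx₀⟩ := hproper.2
  lift g x₀ to ℝ using ⟨hx₀, hproper.1 x₀⟩ with m hm
  have hs : s ≤ 0 := by
    by_contra! hs
    obtain ⟨n, hn⟩ := exists_nat_gt ((α - u x₀ - s * m) / s)
    have := hsep x₀ (m + n) (by rw [← hm]; exact_mod_cast le_add_of_nonneg_right n.cast_nonneg)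
    rw [div_lt_iff₀ hs] at hn
    linarith
  rcases hs.lt_or_eq with hs | hs
  · have hscale : ∀ (a : X) (μ : ℝ), ((-s)⁻¹ • u) a - μ = (u a + s * μ) / -s := fun a μ => by
      have : s ≠ 0 := hs.ne
      rw [smul_apply, smul_eq_mul]
      field_simp
      ring
    refine Or.inl ⟨(-s)⁻¹ • u, α / -s, fun x μ hxμ => ?_, ?_⟩
    · rw [hscale]
      exact div_lt_div_of_pos_right (hsep x μ hxμ) (neg_pos.2 hs)
    · rw [hscale]
      exact div_lt_div_of_pos_right hφy (neg_pos.2 hs)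
  · refine Or.inr ⟨u, α, fun x μ hxμ => ?_, ?_⟩
    · simpa [hs] using hsep x μ hxμ
    · simpa [hs] using hφy

lemma exists_conj_le (hproper : ErealProper g) (hlsc : LowerSemicontinuous g)
    (hconv : ErealConvexOn g) : ∃ (v : X →L[ℝ] ℝ) (β : ℝ), conj g v ≤ β := by
  obtain ⟨x₀, hx₀⟩ := hproper.2
  lift g x₀ to ℝ using ⟨hx₀, hproper.1 x₀⟩ with m hm
  have hx₀m : g x₀ ≤ m := hm.symm.le
  have hout : ¬ g x₀ ≤ ((m - 1 : ℝ) : EReal) := by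
    rw [← hm]; exact_mod_cast (by linarith : ¬ m ≤ m - 1)
  rcases exists_separation_realEpigraph hproper hlsc hconv hout with
    ⟨u, α, hsep, -⟩ | ⟨u, α, hsep, hα⟩
  · exact ⟨u, α, conj_le_of_forall hproper.1 fun x μ hxμ => (hsep x μ hxμ).le⟩
  · exact absurd (hsep x₀ m hx₀m) hα.not_gt

lemma le_of_forall_mem_gphConj (hproper : ErealProper g) (hlsc : LowerSemicontinuous g)
    (hconv : ErealConvexOn g) {y : X} {c : ℝ} (h : ∀ q ∈ gphConj g, q.1 y - q.2 ≤ c) :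
    g y ≤ c := by
  by_contra hyc
  rcases exists_separation_realEpigraph hproper hlsc hconv hyc with
    ⟨u, α, hsep, hα⟩ | ⟨u, α, hsep, hα⟩
  · obtain ⟨γ, hγα, hγ⟩ := exists_mem_gphConj_of_conj_le hproper
      (conj_le_of_forall hproper.1 fun x μ hxμ => (hsep x μ hxμ).le)
    linarith [h _ hγ]
  · -- Tilt the vertical hyperplane: add `n u` to an affine minorant `v` of `g`.
    obtain ⟨v, β, hv⟩ := exists_conj_le hproper hlsc hconv
    have hbound : ∀ n : ℕ, n * (u y - α) ≤ c + β - v y := fun n => by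
      have hconj : conj g (v + (n : ℝ) • u) ≤ ((β + n * α : ℝ) : EReal) := by
        refine conj_le_of_forall hproper.1 fun x μ hxμ => ?_
        have hvx : v x - μ ≤ β := by exact_mod_cast (apply_sub_le_conj_of_le v hxμ).trans hv
        have hux : n * u x ≤ n * α := mul_le_mul_of_nonneg_left (hsep x μ hxμ).le n.cast_nonneg
        simp only [add_apply, smul_apply, smul_eq_mul]
        linarith
      obtain ⟨γ, hγβ, hγ⟩ := exists_mem_gphConj_of_conj_le hproper hconj
      have := h _ hγ
      simp only [add_apply, smul_apply, smul_eq_mul] at this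
      linarith
    obtain ⟨n, hn⟩ := exists_nat_gt ((c + β - v y) / (u y - α))
    rw [div_lt_iff₀ (by linarith)] at hn
    linarith [hbound n]

end Conjugate

section Feasibility

variable {T X : Type*} {f : T → X → EReal}

lemma Linf.abs_apply_le_norm (p : Linf T) (t : T) : |p t| ≤ ‖p‖ :=
  Real.norm_eq_abs (p t) ▸ lp.norm_apply_le_norm ENNReal.top_ne_zero p t

lemma Linf.norm_smul_one_le (c : ℝ) : ‖c • (1 : Linf T)‖ ≤ |c| :=
  lp.norm_le_of_forall_le (abs_nonneg c) fun t => by simp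

lemma ssc_zero_iff : SSC f 0 ↔ ∃ (xh : X) (c : ℝ), c < 0 ∧ ∀ t, f t xh ≤ c := by
  simp only [SSC, lp.coeFn_zero, Pi.zero_apply, EReal.coe_zero, sub_zero]
  refine exists_congr fun xh =>
    ⟨fun h => ?_, fun ⟨c, hc, h⟩ => (iSup_le h).trans_lt (by exact_mod_cast hc)⟩
  obtain ⟨b, hb, hle⟩ := iSup_lt_iff.mp h
  obtain ⟨c, hbc, hc⟩ := EReal.lt_iff_exists_real_btwn.mp hb
  exact ⟨c, by exact_mod_cast hc, fun t => (hle t).trans hbc.le⟩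

lemma zero_mem_interior_feas_nonempty_of_slater {xh : X} {c : ℝ} (hc : c < 0)
    (hxh : ∀ t, f t xh ≤ c) : (0 : Linf T) ∈ interior {p : Linf T | (feas f p).Nonempty} := by
  refine mem_interior_iff_mem_nhds.mpr (mem_of_superset (Metric.ball_mem_nhds 0 (neg_pos.2 hc))
    fun p hp => ⟨xh, fun t => (hxh t).trans ?_⟩)
  rw [mem_ball_zero_iff] at hp
  exact_mod_cast (by linarith [neg_abs_le (p t), Linf.abs_apply_le_norm p t] : c ≤ p t)

lemma ssc_zero_of_zero_mem_interior
    (h : (0 : Linf T) ∈ interior {p : Linf T | (feas f p).Nonempty}) : SSC f 0 := by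
  obtain ⟨ε, hε, hball⟩ := Metric.mem_nhds_iff.mp (mem_interior_iff_mem_nhds.mp h)
  obtain ⟨y, hy⟩ := hball (mem_ball_zero_iff.mpr ((Linf.norm_smul_one_le (-(ε / 2))).trans_lt
    (by rw [abs_neg, abs_of_pos (half_pos hε)]; linarith)))
  exact ssc_zero_iff.mpr ⟨y, -(ε / 2), by linarith, fun t => by simpa [-neg_smul] using hy t⟩

lemma zero_mem_interior_feas_nonempty_of_lipLike [NormedAddCommGroup X] {x : X} {ℓ : ℝ}
    (hx : x ∈ feas f 0) (h : LipLike (feasGraph f) 0 x ℓ) :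
    (0 : Linf T) ∈ interior {p : Linf T | (feas f p).Nonempty} := by
  obtain ⟨U, hU, V, hV, hlip⟩ := h
  refine mem_interior_iff_mem_nhds.mpr (mem_of_superset hU fun p hp => ?_)
  obtain ⟨y, hy, -⟩ := hlip 0 (mem_of_mem_nhds hU) p hp x (mem_of_mem_nhds hV) hx
  exact ⟨y, hy⟩

end Feasibility

section System

variable {T X : Type*} [NormedAddCommGroup X] [NormedSpace ℝ X] {f : T → X → EReal}

lemma Hset_zero : Hset f 0 = convexHull ℝ (⋃ t, epiConj (f t)) := by
  simp [Hset]

lemma Cset_zero : Cset f 0 = convexHull ℝ (⋃ t, gphConj (f t)) := by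
  simp [Cset]

lemma Cset_subset_Hset (p : Linf T) : Cset f p ⊆ Hset f p :=
  convexHull_mono (Set.iUnion_mono fun _ _ hq => le_of_eq hq)

lemma convex_comb_mem_feas (hconv : ∀ t, ErealConvexOn (f t)) {p q : Linf T} {y z : X}
    {c θ : ℝ} (hy : y ∈ feas f p) (hz : ∀ t, f t z ≤ c) (hθ₀ : 0 ≤ θ) (hθ₁ : θ ≤ 1)
    (hq : ∀ t, (1 - θ) * p t + θ * c ≤ q t) : (1 - θ) • y + θ • z ∈ feas f q := fun t =>
  calc f t ((1 - θ) • y + θ • z) ≤ ((1 - θ : ℝ) : EReal) * f t y + (θ : EReal) * f t z :=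
        hconv t y z (1 - θ) θ (by linarith) hθ₀ (by ring)
    _ ≤ ((1 - θ : ℝ) : EReal) * (p t : ℝ) + (θ : EReal) * c :=
        add_le_add (mul_le_mul_of_nonneg_left (hy t) (EReal.coe_nonneg.mpr (by linarith)))
          (mul_le_mul_of_nonneg_left (hz t) (EReal.coe_nonneg.mpr hθ₀))
    _ = (((1 - θ) * p t + θ * c : ℝ) : EReal) := by push_cast; rfl
    _ ≤ q t := by exact_mod_cast hq t

lemma lipLike_feasGraph_of_slater (hconv : ∀ t, ErealConvexOn (f t)) {xh : X} {c : ℝ}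
    (hc : c < 0) (hxh : ∀ t, f t xh ≤ c) (x : X) :
    LipLike (feasGraph f) 0 x (2 * (1 + ‖x - xh‖) / -c) := by
  refine ⟨Metric.ball 0 (-c / 4), Metric.ball_mem_nhds _ (by linarith), Metric.ball x 1,
    Metric.ball_mem_nhds _ one_pos, fun p hp q hq y hy hpy => ?_⟩
  rw [mem_ball_zero_iff] at hp hq
  rw [Metric.mem_ball, dist_eq_norm] at hy
  set θ := 2 * ‖p - q‖ / -c
  have hθ : θ * -c = 2 * ‖p - q‖ := div_mul_cancel₀ _ (by linarith)
  have hθ₀ : 0 ≤ θ := div_nonneg (by positivity) (by linarith)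
  have hpq : ‖p - q‖ ≤ ‖p‖ + ‖q‖ := norm_sub_le p q
  refine ⟨(1 - θ) • y + θ • xh, convex_comb_mem_feas hconv hpy hxh hθ₀ ?_ fun t => ?_, ?_⟩
  · nlinarith
  · have hpt := Linf.abs_apply_le_norm p t
    have hpqt := Linf.abs_apply_le_norm (p - q) t
    simp only [lp.coeFn_sub, Pi.sub_apply] at hpqt
    have : θ * (-c / 2) ≤ θ * (p t - c) :=
      mul_le_mul_of_nonneg_left (by linarith [neg_abs_le (p t)]) hθ₀
    nlinarith [le_abs_self (p t - q t)]
  · have hyxh : ‖y - xh‖ ≤ 1 + ‖x - xh‖ := by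
      calc ‖y - xh‖ = ‖(y - x) + (x - xh)‖ := by rw [sub_add_sub_cancel]
        _ ≤ 1 + ‖x - xh‖ := (norm_add_le _ _).trans (by linarith)
    calc ‖y - ((1 - θ) • y + θ • xh)‖ = θ * ‖y - xh‖ := by
          rw [← norm_smul_of_nonneg hθ₀, smul_sub, sub_smul, one_smul]; congr 1; abel
      _ ≤ θ * (1 + ‖x - xh‖) := mul_le_mul_of_nonneg_left hyxh hθ₀
      _ = 2 * (1 + ‖x - xh‖) / -c * ‖p - q‖ := by simp only [θ]; ring

lemma sub_le_of_mem_Hset_zero {xh : X} {c : ℝ} (hxh : ∀ t, f t xh ≤ c) :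
    ∀ q ∈ Hset f 0, q.1 xh - q.2 ≤ c := by
  rw [Hset_zero]
  have hlin : IsLinearMap ℝ fun q : (X →L[ℝ] ℝ) × ℝ => q.1 xh - q.2 :=
    ⟨fun a b => by simp only [Prod.fst_add, Prod.snd_add, add_apply]; ring,
      fun a b => by simp only [Prod.smul_fst, Prod.smul_snd, smul_apply, smul_eq_mul]; ring⟩
  refine convexHull_min (Set.iUnion_subset fun t q hq => ?_) (convex_halfSpace_le hlin c)
  have : ((q.1 xh - c : ℝ) : EReal) ≤ q.2 := (apply_sub_le_conj_of_le q.1 (hxh t)).trans hq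
  have : q.1 xh - c ≤ q.2 := by exact_mod_cast this
  show q.1 xh - q.2 ≤ c
  linarith

lemma exists_slater_of_separation (x₀ x : X) (r : ℝ) {δ : ℝ} (hδ : 0 < δ) :
    ∃ (xh : X) (c : ℝ), c < 0 ∧
      ∀ (u : X →L[ℝ] ℝ) (γ : ℝ), u x₀ ≤ γ → δ < u x + r * γ → u xh - γ ≤ c := by
  -- With `k = 1 + |r| + r ≥ 1`: `k (⟨u, x̂⟩ - γ) ≤ (1 + |r|) γ - ⟨u, x⟩ - k γ = -(⟨u, x⟩ + r γ)`.
  set k := 1 + |r| + r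
  have hk : 0 < k := by linarith [neg_abs_le r]
  refine ⟨k⁻¹ • ((1 + |r|) • x₀ - x), -δ / k, div_neg_of_neg_of_pos (by linarith) hk,
    fun u γ hx₀ hx => ?_⟩
  have : (1 + |r|) * u x₀ ≤ (1 + |r|) * γ := mul_le_mul_of_nonneg_left hx₀ (by positivity)
  have hval : u (k⁻¹ • ((1 + |r|) • x₀ - x)) - γ = ((1 + |r|) * u x₀ - u x - k * γ) / k := by
    simp only [map_smul, map_sub, smul_eq_mul]
    field_simp
  rw [hval]
  exact div_le_div_of_nonneg_right (by linarith) hk.le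

lemma notMem_wclosure2_Hset_zero_of_slater {xh : X} {c : ℝ} (hc : c < 0)
    (hxh : ∀ t, f t xh ≤ c) : ((0 : X →L[ℝ] ℝ), (0 : ℝ)) ∉ wclosure2 (Hset f 0) := fun h0 => by
  have := forall_mem_wclosure2_le (r := -1)
    (fun q hq => by linarith [sub_le_of_mem_Hset_zero hxh q hq]) _ h0
  simp only [zero_apply, mul_zero, add_zero] at this
  linarith

lemma ssc_zero_of_notMem_wclosure2_Cset_zero (hproper : ∀ t, ErealProper (f t))
    (hlsc : ∀ t, LowerSemicontinuous (f t)) (hconv : ∀ t, ErealConvexOn (f t)) {x₀ : X}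
    (hx₀ : x₀ ∈ feas f 0) (h : ((0 : X →L[ℝ] ℝ), (0 : ℝ)) ∉ wclosure2 (Cset f 0)) :
    SSC f 0 := by
  obtain ⟨x, r, δ, hδ, hsep⟩ :=
    exists_forall_lt_of_notMem_wclosure2 (S := Cset f 0) (convex_convexHull ℝ _) h
  obtain ⟨xh, c, hc, hxh⟩ := exists_slater_of_separation x₀ x r hδ
  refine ssc_zero_iff.mpr ⟨xh, c, hc, fun t => le_of_forall_mem_gphConj (hproper t) (hlsc t)
    (hconv t) fun q hq => hxh q.1 q.2 ?_ (hsep q ?_)⟩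
  · have := apply_sub_le_conj_of_le q.1 (hx₀ t)
    rw [hq] at this
    simpa using this
  · rw [Cset_zero]
    exact subset_convexHull ℝ _ (Set.mem_iUnion_of_mem t hq)

end System

theorem stmt_11_general {T : Type*}
    {X : Type*} [NormedAddCommGroup X] [NormedSpace ℝ X]
    (f : T → X → EReal)
    (hproper : ∀ t, ErealProper (f t))
    (hlsc : ∀ t, LowerSemicontinuous (f t))
    (hconv : ∀ t, ErealConvexOn (f t))
    (hne : (feas f (0 : Linf T)).Nonempty) :
    [ SSC f 0,
      (0 : Linf T) ∈ interior {p : Linf T | (feas f p).Nonempty},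
      ∀ x ∈ feas f (0 : Linf T), ∃ ℓ : ℝ, 0 ≤ ℓ ∧ LipLike (feasGraph f) 0 x ℓ,
      ((0 : X →L[ℝ] ℝ), (0 : ℝ)) ∉ wclosure2 (Hset f 0),
      ((0 : X →L[ℝ] ℝ), (0 : ℝ)) ∉ wclosure2 (Cset f 0) ].TFAE := by
  obtain ⟨x₀, hx₀⟩ := hne
  tfae_have 1 → 2 := fun h1 => by
    obtain ⟨xh, c, hc, hxh⟩ := ssc_zero_iff.mp h1
    exact zero_mem_interior_feas_nonempty_of_slater hc hxh
  tfae_have 2 → 1 := ssc_zero_of_zero_mem_interior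
  tfae_have 1 → 3 := fun h1 x _ => by
    obtain ⟨xh, c, hc, hxh⟩ := ssc_zero_iff.mp h1
    exact ⟨_, div_nonneg (by positivity) (by linarith), lipLike_feasGraph_of_slater hconv hc hxh x⟩
  tfae_have 3 → 2 := fun h3 => by
    obtain ⟨ℓ, -, hlip⟩ := h3 x₀ hx₀
    exact zero_mem_interior_feas_nonempty_of_lipLike hx₀ hlip
  tfae_have 1 → 4 := fun h1 => by
    obtain ⟨xh, c, hc, hxh⟩ := ssc_zero_iff.mp h1
    exact notMem_wclosure2_Hset_zero_of_slater hc hxh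
  tfae_have 4 → 5 := fun h4 h5 => h4 (wclosure2_mono (Cset_subset_Hset 0) h5)
  tfae_have 5 → 1 := ssc_zero_of_notMem_wclosure2_Cset_zero hproper hlsc hconv hx₀
  tfae_finish

theorem stmt_11 {T : Type*} [Nonempty T]
    {X : Type*} [NormedAddCommGroup X] [NormedSpace ℝ X] [CompleteSpace X]
    (f : T → X → EReal)
    (hproper : ∀ t, ErealProper (f t))
    (hlsc : ∀ t, LowerSemicontinuous (f t))
    (hconv : ∀ t, ErealConvexOn (f t))
    (hne : (feas f (0 : Linf T)).Nonempty) :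
    [ SSC f 0,
      (0 : Linf T) ∈ interior {p : Linf T | (feas f p).Nonempty},
      ∀ x ∈ feas f (0 : Linf T), ∃ ℓ : ℝ, 0 ≤ ℓ ∧ LipLike (feasGraph f) 0 x ℓ,
      ((0 : X →L[ℝ] ℝ), (0 : ℝ)) ∉ wclosure2 (Hset f 0),
      ((0 : X →L[ℝ] ℝ), (0 : ℝ)) ∉ wclosure2 (Cset f 0) ].TFAE :=
  stmt_11_general f hproper hlsc hconv hne
end
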